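/- Let S be a symmetric conjugation-invariant generating set of G and suppose q₁,...,q_m are homogeneous quasimorphisms bounded on S with elements p₁,...,p_m ∈ S satisfying q_k(p_j) = δ_{kj}. Then the map ℤ^m → (conjugacy classes of G, d̄) sending (i₁,...,i_m) to the conjugacy class of p₁^{i₁}⋯p_m^{i_m} is a quasi-isometric embedding, where d̄([g],[h]) = min_k d_S(g, k⁻¹hk). -/

import Mathlib

/-- The word norm of `g` with respect to a generating set `S`. -/
noncomputable def wordNorm {G : Type*} [Group G] (S : Set G) (g : G) : ℕ :=
  sInf {n | ∃ l : List G, (∀ x ∈ l, x ∈ S) ∧ l.prod = g ∧ l.length = n}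

/-- The word metric `d_S(g,h) = |g·h⁻¹|_S`. -/
noncomputable def dS {G : Type*} [Group G] (S : Set G) (g h : G) : ℕ :=
  wordNorm S (g * h⁻¹)

/-- The induced distance on conjugacy classes (computed on representatives):
`d̄(g,h) = min_{k ∈ G} d_S(g, k⁻¹·h·k)`. -/
noncomputable def dBar {G : Type*} [Group G] (S : Set G) (g h : G) : ℕ :=
  ⨅ k : G, dS S g (k⁻¹ * h * k)

/-- The (ordered) product `p₁^{i₁} ⋯ p_m^{i_m}`. -/
def orderedPow {G : Type*} [Group G] {m : ℕ} (p : Fin m → G) (i : Fin m → ℤ) : G :=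
  ((List.finRange m).map fun k => p k ^ i k).prod

section Aux
variable {G : Type*} [Group G] {S : Set G}

lemma wordNorm_le (g : G) (l : List G) (hl : ∀ x ∈ l, x ∈ S) (hpr : l.prod = g) :
    wordNorm S g ≤ l.length :=
  Nat.sInf_le ⟨l, hl, hpr, rfl⟩

lemma exists_word (hgen : Subgroup.closure S = ⊤) (hsym : ∀ s ∈ S, s⁻¹ ∈ S) (g : G) :
    ∃ l : List G, (∀ x ∈ l, x ∈ S) ∧ l.prod = g ∧ l.length = wordNorm S g := by
  have hmem : g ∈ Subgroup.closure S := hgen ▸ Subgroup.mem_top g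
  have hmem2 : g ∈ Submonoid.closure (S ∪ S⁻¹) := by
    rw [← Subgroup.closure_toSubmonoid]; exact hmem
  obtain ⟨l, hl, hprod⟩ := Submonoid.exists_list_of_mem_closure hmem2
  have hl' : ∀ x ∈ l, x ∈ S := by
    intro x hx
    rcases hl x hx with h | h
    · exact h
    · simpa using hsym _ h
  have hne : {n | ∃ l : List G, (∀ x ∈ l, x ∈ S) ∧ l.prod = g ∧ l.length = n}.Nonempty :=
    ⟨l.length, l, hl', hprod, rfl⟩
  obtain ⟨l', h1, h2, h3⟩ := Nat.sInf_mem hne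
  exact ⟨l', h1, h2, h3⟩

variable (hgen : Subgroup.closure S = ⊤) (hsym : ∀ s ∈ S, s⁻¹ ∈ S)
  (hconj : ∀ k : G, ∀ s ∈ S, k * s * k⁻¹ ∈ S)

include hgen hsym in
lemma wordNorm_mul (g h : G) : wordNorm S (g * h) ≤ wordNorm S g + wordNorm S h := by
  obtain ⟨l1, h1, h2, h3⟩ := exists_word hgen hsym g
  obtain ⟨l2, k1, k2, k3⟩ := exists_word hgen hsym h
  calc wordNorm S (g * h) ≤ (l1 ++ l2).length := by
        apply wordNorm_le _ _ (by simp; exact fun x hx => hx.elim (h1 x) (k1 x))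
        simp [h2, k2]
    _ = wordNorm S g + wordNorm S h := by simp [h3, k3]

include hgen hsym hconj in
lemma wordNorm_conj (k g : G) : wordNorm S (k * g * k⁻¹) ≤ wordNorm S g := by
  obtain ⟨l, h1, h2, h3⟩ := exists_word hgen hsym g
  calc wordNorm S (k * g * k⁻¹) ≤ (l.map fun x => k * x * k⁻¹).length := by
        apply wordNorm_le
        · intro x hx
          simp only [List.mem_map] at hx
          obtain ⟨y, hy, rfl⟩ := hx
          exact hconj k y (h1 y hy)
        · rw [← h2]
          exact ((MulAut.conj k).toMonoidHom.map_list_prod l).symm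
    _ = wordNorm S g := by simp [h3]

include hgen hsym hconj in
lemma wordNorm_comm (g h : G) : wordNorm S (g * h) ≤ wordNorm S (h * g) := by
  have : g * (h * g) * g⁻¹ = g * h := by group
  simpa [this] using wordNorm_conj hgen hsym hconj g (h * g)

lemma wordNorm_zpow {a : G} (ha : a ∈ S) (hsym' : ∀ s ∈ S, s⁻¹ ∈ S) (n : ℤ) :
    wordNorm S (a ^ n) ≤ n.natAbs := by
  rcases le_or_gt 0 n with hn | hn
  · lift n to ℕ using hn
    have h1 : a ^ (n:ℤ) = (List.replicate n a).prod := by simp [List.prod_replicate]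
    apply le_trans (wordNorm_le _ (List.replicate n a) (by intro x hx; simp at hx; simp [hx.2, ha]) h1.symm)
    simp
  · have heq : a ^ n = (a⁻¹) ^ (n.natAbs) := by
      rw [inv_pow, ← zpow_natCast, ← inv_zpow, inv_zpow']
      congr 1
      omega
    rw [heq]
    apply le_trans (wordNorm_le _ (List.replicate n.natAbs a⁻¹) (by simp [hsym' a ha]) (by simp [List.prod_replicate]))
    simp
end Aux

section Aux2
variable {G : Type*} [Group G] {S : Set G}
  (hgen : Subgroup.closure S = ⊤) (hsym : ∀ s ∈ S, s⁻¹ ∈ S)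
  (hconj : ∀ k : G, ∀ s ∈ S, k * s * k⁻¹ ∈ S)

include hgen hsym hconj in
lemma wordNorm_prod_prod_inv : ∀ l1 l2 : List G, l1.length = l2.length →
    wordNorm S (l1.prod * l2.prod⁻¹) ≤
      ((l1.zip l2).map fun ab => wordNorm S (ab.1 * ab.2⁻¹)).sum := by
  intro l1
  induction l1 with
  | nil =>
    intro l2 hlen
    have : l2 = [] := List.eq_nil_of_length_eq_zero hlen.symm
    subst this
    simpa using wordNorm_le (1 : G) [] (by simp) (by simp)
  | cons a t1 ih =>
    intro l2 hlen
    cases l2 with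
    | nil => simp at hlen
    | cons b t2 =>
      simp only [List.length_cons, Nat.add_right_cancel_iff] at hlen
      have key : (a :: t1).prod * (b :: t2).prod⁻¹
          = a * ((t1.prod * t2.prod⁻¹) * (b⁻¹ * a)) * a⁻¹ := by
        simp only [List.prod_cons]
        group
      rw [key]
      calc wordNorm S (a * ((t1.prod * t2.prod⁻¹) * (b⁻¹ * a)) * a⁻¹)
          ≤ wordNorm S ((t1.prod * t2.prod⁻¹) * (b⁻¹ * a)) :=
            wordNorm_conj hgen hsym hconj _ _
        _ ≤ wordNorm S (t1.prod * t2.prod⁻¹) + wordNorm S (b⁻¹ * a) :=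
            wordNorm_mul hgen hsym _ _
        _ ≤ wordNorm S (t1.prod * t2.prod⁻¹) + wordNorm S (a * b⁻¹) := by
            have := wordNorm_comm hgen hsym hconj b⁻¹ a
            omega
        _ ≤ ((t1.zip t2).map fun ab => wordNorm S (ab.1 * ab.2⁻¹)).sum
              + wordNorm S (a * b⁻¹) := by
            have := ih t2 hlen
            omega
        _ = (((a :: t1).zip (b :: t2)).map fun ab => wordNorm S (ab.1 * ab.2⁻¹)).sum := by
            simp [List.zip_cons_cons]
            omega

variable {q : G → ℝ} {Dk C : ℝ}
  (hdef : ∀ g h : G, |q (g * h) - q g - q h| ≤ Dk)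
  (hhom : ∀ (g : G) (r : ℤ), q (g ^ r) = r * q g)
  (hbd : ∀ s ∈ S, |q s| ≤ C)

include hhom in
lemma q_one : q 1 = 0 := by
  have := hhom 1 0
  simpa using this

include hhom in
lemma q_inv (g : G) : q g⁻¹ = - q g := by
  have := hhom g (-1)
  simpa using this

include hdef hhom in
lemma Dk_nonneg : 0 ≤ Dk := by
  have := hdef 1 1
  simp [q_one hhom] at this
  linarith [abs_nonneg (q (1:G))]

include hdef hhom hbd in
lemma q_abs_prod : ∀ l : List G, (∀ x ∈ l, x ∈ S) → |q l.prod| ≤ l.length * (C + Dk) := by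
  intro l
  induction l with
  | nil => intro _; simp [q_one hhom]
  | cons a t ih =>
    intro hl
    have h1 : |q (a * t.prod) - q a - q t.prod| ≤ Dk := hdef a t.prod
    have h2 : |q a| ≤ C := hbd a (hl a (by simp))
    have h3 : |q t.prod| ≤ t.length * (C + Dk) := ih (fun x hx => hl x (by simp [hx]))
    have : |q (a :: t).prod| ≤ Dk + C + t.length * (C + Dk) := by
      rw [List.prod_cons]
      have := abs_sub_abs_le_abs_sub (q (a * t.prod)) (q a + q t.prod)
      have habs : |q a + q t.prod| ≤ |q a| + |q t.prod| := abs_add_le _ _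
      have : |q (a * t.prod) - (q a + q t.prod)| ≤ Dk := by
        convert h1 using 2; ring
      calc |q (a * t.prod)| ≤ |q (a * t.prod) - (q a + q t.prod)| + |q a + q t.prod| := by
            have := abs_sub_abs_le_abs_sub (q (a*t.prod)) (q a + q t.prod); linarith [abs_abs (q a + q t.prod)]
        _ ≤ Dk + C + t.length * (C + Dk) := by linarith
    simp only [List.length_cons]
    push_cast
    linarith

include hgen hsym hdef hhom hbd in
lemma q_abs_le (g : G) : |q g| ≤ (wordNorm S g) * (C + Dk) := by
  obtain ⟨l, h1, h2, h3⟩ := exists_word hgen hsym g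
  have := q_abs_prod hdef hhom hbd l h1
  rw [h2, h3] at this
  exact this

include hdef hhom in
lemma q_conj (c g : G) : q (c⁻¹ * g * c) = q g := by
  have key : ∀ n : ℕ, (n : ℝ) * |q (c⁻¹ * g * c) - q g| ≤ 2 * Dk := by
    intro n
    have hn : (c⁻¹ * g * c) ^ (n : ℤ) = c⁻¹ * g ^ (n : ℤ) * c := by
      have := conj_zpow (i := (n:ℤ)) (a := c⁻¹) (b := g)
      simpa using this
    have e1 : q ((c⁻¹ * g * c) ^ (n:ℤ)) = n * q (c⁻¹ * g * c) := hhom _ _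
    have e2 : q (g ^ (n:ℤ)) = n * q g := hhom _ _
    have t1 : |q (c⁻¹ * (g ^ (n:ℤ) * c)) - q c⁻¹ - q (g ^ (n:ℤ) * c)| ≤ Dk := hdef _ _
    have t2 : |q (g ^ (n:ℤ) * c) - q (g ^ (n:ℤ)) - q c| ≤ Dk := hdef _ _
    have t3 : q c⁻¹ = - q c := q_inv hhom c
    have heq : c⁻¹ * g ^ (n:ℤ) * c = c⁻¹ * (g ^ (n:ℤ) * c) := by group
    have : |(n : ℝ) * (q (c⁻¹ * g * c) - q g)| ≤ 2 * Dk := by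
      have : (n : ℝ) * (q (c⁻¹ * g * c) - q g)
          = (q (c⁻¹ * (g ^ (n:ℤ) * c)) - q c⁻¹ - q (g ^ (n:ℤ) * c))
            + (q (g ^ (n:ℤ) * c) - q (g ^ (n:ℤ)) - q c) := by
        rw [← heq, ← hn, e1, e2, t3]; ring
      rw [this]
      calc _ ≤ _ := abs_add_le _ _
        _ ≤ 2 * Dk := by linarith
    have hnn : |(n:ℝ)| = (n:ℝ) := abs_of_nonneg (Nat.cast_nonneg n)
    calc (n:ℝ) * |q (c⁻¹ * g * c) - q g| = |(n : ℝ) * (q (c⁻¹ * g * c) - q g)| := by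
          rw [abs_mul, hnn]
      _ ≤ 2 * Dk := this
  have : q (c⁻¹ * g * c) - q g = 0 := by
    by_contra h
    have hpos : 0 < |q (c⁻¹ * g * c) - q g| := abs_pos.mpr h
    obtain ⟨n, hn⟩ := exists_nat_gt (2 * Dk / |q (c⁻¹ * g * c) - q g|)
    have := key n
    rw [div_lt_iff₀ hpos] at hn
    linarith
  linarith

include hdef hhom in
lemma q_prod_sum : ∀ l : List G, |q l.prod - (l.map q).sum| ≤ l.length * Dk := by
  intro l
  induction l with
  | nil => simp [q_one hhom]
  | cons a t ih =>
    have h1 : |q (a * t.prod) - q a - q t.prod| ≤ Dk := hdef a t.prod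
    have hD := Dk_nonneg hdef hhom
    simp only [List.prod_cons, List.map_cons, List.sum_cons, List.length_cons]
    push_cast
    have : q (a * t.prod) - (q a + (t.map q).sum)
        = (q (a * t.prod) - q a - q t.prod) + (q t.prod - (t.map q).sum) := by ring
    rw [this]
    calc _ ≤ _ := abs_add_le _ _
      _ ≤ Dk + t.length * Dk := by linarith
      _ ≤ (t.length + 1) * Dk := by ring_nf; linarith
end Aux2

/-- Under the hypotheses of STATEMENT 7, the map sending
`(i₁,...,i_m) ∈ ℤ^m` to the conjugacy class of `p₁^{i₁}⋯p_m^{i_m}` is a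
quasi-isometric embedding of `(ℤ^m, ℓ¹)` into the set of conjugacy classes of `G`
with the pseudometric `d̄`. -/
theorem stmt19 {G : Type*} [Group G] (S : Set G)
    (hgen : Subgroup.closure S = ⊤)
    (hsym : ∀ s ∈ S, s⁻¹ ∈ S)
    (hconj : ∀ k : G, ∀ s ∈ S, k * s * k⁻¹ ∈ S)
    (m : ℕ) (q : Fin m → G → ℝ) (D : Fin m → ℝ)
    (hdef : ∀ k, ∀ g h : G, |q k (g * h) - q k g - q k h| ≤ D k)
    (hhom : ∀ k, ∀ (g : G) (r : ℤ), q k (g ^ r) = r * q k g)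
    (C : ℝ) (hbd : ∀ k, ∀ s ∈ S, |q k s| ≤ C)
    (p : Fin m → G) (hp : ∀ j, p j ∈ S)
    (hdelta : ∀ k j, q k (p j) = if k = j then (1 : ℝ) else 0) :
    ∃ A : ℝ, 1 ≤ A ∧ ∃ B : ℝ, 0 ≤ B ∧ ∀ i j : Fin m → ℤ,
      A⁻¹ * ((∑ k, |i k - j k| : ℤ) : ℝ) - B ≤
          (dBar S (orderedPow p i) (orderedPow p j) : ℝ) ∧
      (dBar S (orderedPow p i) (orderedPow p j) : ℝ) ≤
          A * ((∑ k, |i k - j k| : ℤ) : ℝ) + B := by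
  classical
  have hD0 : ∀ k, (0:ℝ) ≤ D k := fun k => Dk_nonneg (hdef k) (hhom k)
  set A' : ℝ := ∑ k : Fin m, (C + D k) with hA'
  have hDsum : (0:ℝ) ≤ ∑ k : Fin m, D k := Finset.sum_nonneg fun k _ => hD0 k
  refine ⟨max 1 A', le_max_left _ _, (2 * m + 1) * ∑ k : Fin m, D k,
    mul_nonneg (by positivity) hDsum, ?_⟩
  set A : ℝ := max 1 A'
  set B : ℝ := (2 * m + 1) * ∑ k : Fin m, D k with hB
  have hA1 : (1:ℝ) ≤ A := le_max_left _ _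
  have hApos : (0:ℝ) < A := lt_of_lt_of_le one_pos hA1
  have hB0 : (0:ℝ) ≤ B := mul_nonneg (by positivity) hDsum
  intro i j
  set g := orderedPow p i with hg
  set h := orderedPow p j with hh
  -- q k of orderedPow is close to i k
  have hqop : ∀ (k : Fin m) (i' : Fin m → ℤ),
      |q k (orderedPow p i') - (i' k : ℝ)| ≤ m * D k := by
    intro k i'
    have h1 := q_prod_sum (hdef k) (hhom k)
      ((List.finRange m).map fun t => p t ^ i' t)
    have hlen : ((List.finRange m).map fun t => p t ^ i' t).length = m := by simp
    have hsum : ((((List.finRange m).map fun t => p t ^ i' t)).map (q k)).sum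
        = (i' k : ℝ) := by
      rw [List.map_map]
      have : ((List.finRange m).map ((q k) ∘ fun t => p t ^ i' t)).sum
          = ∑ t : Fin m, q k (p t ^ i' t) := (Fin.sum_univ_def _).symm
      rw [this]
      have : ∀ t : Fin m, q k (p t ^ i' t) = if k = t then (i' t : ℝ) else 0 := by
        intro t
        rw [hhom k (p t) (i' t), hdelta k t]
        split <;> simp
      simp_rw [this]
      simp
    rw [hlen, hsum] at h1
    exact h1
  -- the ℤ-sum as a real
  have hcast : ((∑ k, |i k - j k| : ℤ) : ℝ) = ∑ k : Fin m, |(i k : ℝ) - (j k : ℝ)| := by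
    push_cast
    rfl
  have hSnn : (0:ℝ) ≤ ((∑ k, |i k - j k| : ℤ) : ℝ) := by
    rw [hcast]; positivity
  constructor
  · -- lower bound
    obtain ⟨c, hc⟩ := Nat.sInf_mem
      (Set.range_nonempty (fun c : G => dS S g (c⁻¹ * h * c)))
    have hdb : dBar S g h = dS S g (c⁻¹ * h * c) := hc.symm
    set N : ℕ := dS S g (c⁻¹ * h * c) with hN
    -- per-coordinate estimate
    have hper : ∀ k : Fin m, |(i k : ℝ) - (j k : ℝ)|
        ≤ (N : ℝ) * (C + D k) + (2 * m + 1) * D k := by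
      intro k
      have e1 : |q k g - (i k : ℝ)| ≤ m * D k := hqop k i
      have e2 : |q k h - (j k : ℝ)| ≤ m * D k := hqop k j
      have e3 : q k (c⁻¹ * h * c) = q k h := q_conj (hdef k) (hhom k) c h
      have e4 : |q k (g * (c⁻¹ * h * c)⁻¹)| ≤ (N : ℝ) * (C + D k) :=
        q_abs_le hgen hsym (hdef k) (hhom k) (hbd k) _
      have e5 : |q k ((g * (c⁻¹ * h * c)⁻¹) * (c⁻¹ * h * c))
          - q k (g * (c⁻¹ * h * c)⁻¹) - q k (c⁻¹ * h * c)| ≤ D k := hdef k _ _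
      have e6 : (g * (c⁻¹ * h * c)⁻¹) * (c⁻¹ * h * c) = g := by group
      rw [e6, e3] at e5
      have : |q k g - q k h| ≤ (N : ℝ) * (C + D k) + D k := by
        have := abs_sub_abs_le_abs_sub (q k g - q k h) (q k g - q k (g * (c⁻¹*h*c)⁻¹) - q k h)
        have h7 : q k g - q k h = (q k g - q k (g * (c⁻¹*h*c)⁻¹) - q k h) + q k (g * (c⁻¹*h*c)⁻¹) := by ring
        calc |q k g - q k h| ≤ |q k g - q k (g * (c⁻¹*h*c)⁻¹) - q k h| + |q k (g * (c⁻¹*h*c)⁻¹)| := by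
              rw [h7]; exact abs_add_le _ _
          _ ≤ D k + (N:ℝ) * (C + D k) := by
              have : |q k g - q k (g * (c⁻¹*h*c)⁻¹) - q k h| = |q k ((g * (c⁻¹*h*c)⁻¹) * (c⁻¹*h*c)) - q k (g * (c⁻¹*h*c)⁻¹) - q k (c⁻¹*h*c)| := by rw [e6, e3]
              rw [this]; linarith [hdef k (g * (c⁻¹*h*c)⁻¹) (c⁻¹*h*c)]
          _ = (N:ℝ) * (C + D k) + D k := by ring
      have h8 : (i k : ℝ) - (j k : ℝ)
          = -(q k g - i k) + (q k g - q k h) + (q k h - j k) := by ring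
      calc |(i k : ℝ) - (j k : ℝ)| ≤ |q k g - (i k:ℝ)| + |q k g - q k h| + |q k h - (j k:ℝ)| := by
            rw [h8]
            calc _ ≤ |(-(q k g - (i k:ℝ)) + (q k g - q k h))| + |q k h - (j k:ℝ)| := abs_add_le _ _
              _ ≤ |(-(q k g - (i k:ℝ)))| + |q k g - q k h| + |q k h - (j k:ℝ)| := by
                  linarith [abs_add_le (-(q k g - (i k:ℝ))) (q k g - q k h)]
              _ = |q k g - (i k:ℝ)| + |q k g - q k h| + |q k h - (j k:ℝ)| := by rw [abs_neg]
        _ ≤ m * D k + ((N : ℝ) * (C + D k) + D k) + m * D k := by linarith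
        _ = (N : ℝ) * (C + D k) + (2 * m + 1) * D k := by ring
    have hsum2 : ((∑ k, |i k - j k| : ℤ) : ℝ) ≤ (N:ℝ) * A' + B := by
      rw [hcast, hB, hA', Finset.mul_sum, Finset.mul_sum, ← Finset.sum_add_distrib]
      exact Finset.sum_le_sum fun k _ => by
        have := hper k; push_cast at this ⊢; linarith
    have hNA : (N:ℝ) * A' ≤ (N:ℝ) * A :=
      mul_le_mul_of_nonneg_left (le_max_right _ _) (Nat.cast_nonneg N)
    have hfin : ((∑ k, |i k - j k| : ℤ) : ℝ) ≤ (dBar S g h : ℝ) * A + B := by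
      rw [hdb]; linarith
    have hAinv1 : A⁻¹ ≤ 1 := inv_le_one_of_one_le₀ hA1
    have hAinv0 : (0:ℝ) ≤ A⁻¹ := inv_nonneg.mpr hApos.le
    have step : A⁻¹ * ((∑ k, |i k - j k| : ℤ) : ℝ) ≤ A⁻¹ * ((dBar S g h : ℝ) * A + B) :=
      mul_le_mul_of_nonneg_left hfin hAinv0
    have hAA : A⁻¹ * A = 1 := inv_mul_cancel₀ hApos.ne'
    have expand : A⁻¹ * ((dBar S g h : ℝ) * A + B) = (dBar S g h : ℝ) + A⁻¹ * B := by
      field_simp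
    have hBle : A⁻¹ * B ≤ B := by
      calc A⁻¹ * B ≤ 1 * B := mul_le_mul_of_nonneg_right hAinv1 hB0
        _ = B := one_mul B
    linarith [step, expand ▸ step]
  · -- upper bound
    have hub : dBar S g h ≤ dS S g ((1:G)⁻¹ * h * 1) :=
      Nat.sInf_le ⟨(1:G), rfl⟩
    have hdS : dS S g ((1:G)⁻¹ * h * 1) = wordNorm S (g * h⁻¹) := by
      simp [dS]
    have key : wordNorm S (g * h⁻¹) ≤ ∑ k : Fin m, (i k - j k).natAbs := by
      have h1 := wordNorm_prod_prod_inv hgen hsym hconj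
        ((List.finRange m).map fun t => p t ^ i t)
        ((List.finRange m).map fun t => p t ^ j t) (by simp)
      rw [List.zip_map', List.map_map] at h1
      have h2 : (((List.finRange m)).map
          ((fun ab : G × G => wordNorm S (ab.1 * ab.2⁻¹)) ∘ fun t => (p t ^ i t, p t ^ j t))).sum
          ≤ ((List.finRange m).map fun t => (i t - j t).natAbs).sum := by
        apply List.sum_le_sum
        intro t _
        simp only [Function.comp_apply]
        have : p t ^ i t * (p t ^ j t)⁻¹ = p t ^ (i t - j t) := by
          rw [zpow_sub]
        rw [this]
        exact wordNorm_zpow (hp t) hsym _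
      have h3 : ((List.finRange m).map fun t => (i t - j t).natAbs).sum
          = ∑ k : Fin m, (i k - j k).natAbs := (Fin.sum_univ_def _).symm
      calc wordNorm S (g * h⁻¹) = wordNorm S
            ((((List.finRange m)).map fun t => p t ^ i t).prod *
             (((List.finRange m)).map fun t => p t ^ j t).prod⁻¹) := rfl
        _ ≤ _ := h1
        _ ≤ _ := h2
        _ = _ := h3
    have hcast2 : ((∑ k : Fin m, (i k - j k).natAbs : ℕ) : ℝ)
        = ((∑ k, |i k - j k| : ℤ) : ℝ) := by
      push_cast [Nat.cast_natAbs]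
      rfl
    have : (dBar S g h : ℝ) ≤ ((∑ k, |i k - j k| : ℤ) : ℝ) := by
      rw [← hcast2]
      exact_mod_cast le_trans hub (hdS ▸ key)
    nlinarith [hSnn]
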